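/- arXiv:2302.13703 — 2 statements merged into one kernel-verified Lean document; each statement's English description precedes it below -/
import Mathlib

section
/- If G ≤ Sym(Γ) and H ≤ Sym(Δ) are transitive and pre-primitive, and |Γ| and |Δ| are coprime, then the direct product G×H in its coordinatewise product action on Γ×Δ is pre-primitive. -/
open Equiv

variable {Ω : Type*}

/-- `G` is a transitive permutation group on `Ω`. -/
def IsTransitive (G : Subgroup (Perm Ω)) : Prop :=
  ∀ x y : Ω, ∃ g ∈ G, g x = y

/-- The partition (setoid) `r` of `Ω` is `G`-invariant. -/
def IsInvariantPartition (G : Subgroup (Perm Ω)) (r : Setoid Ω) : Prop :=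
  ∀ g ∈ G, ∀ x y : Ω, r.r x y → r.r (g x) (g y)

/-- The partition `r` of `Ω` is the orbit partition of the permutation group `H`. -/
def IsOrbitPartition (H : Subgroup (Perm Ω)) (r : Setoid Ω) : Prop :=
  ∀ x y : Ω, r.r x y ↔ ∃ h ∈ H, h x = y

/-- `G` is pre-primitive: every `G`-invariant partition is the orbit partition
of a subgroup of `G`. -/
def IsPrePrimitive (G : Subgroup (Perm Ω)) : Prop :=
  ∀ r : Setoid Ω, IsInvariantPartition G r → ∃ H ≤ G, IsOrbitPartition H r

/-- `N` is a normal subgroup of the permutation group `G`. -/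
def IsNormalIn (N G : Subgroup (Perm Ω)) : Prop :=
  N ≤ G ∧ ∀ g ∈ G, ∀ n ∈ N, g * n * g⁻¹ ∈ N


/-- The coordinatewise (product) action homomorphism. -/
def prodPermHom (Γ Δ : Type*) : Perm Γ × Perm Δ →* Perm (Γ × Δ) where
  toFun p := Equiv.prodCongr p.1 p.2
  map_one' := by ext ⟨a, b⟩ <;> rfl
  map_mul' p q := by ext ⟨a, b⟩ <;> rfl

/-- The direct product `G × H` in its coordinatewise product action on `Γ × Δ`,
as a subgroup of `Perm (Γ × Δ)`. -/
def productAction {Γ Δ : Type*} (G : Subgroup (Perm Γ)) (H : Subgroup (Perm Δ)) :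
    Subgroup (Perm (Γ × Δ)) :=
  (G.prod H).map (prodPermHom Γ Δ)

/-!
Let `r` be an invariant partition of `Γ × Δ` and let `L ≤ G × H` be the stabilizer of the
block of `(a, b)`. As in Goursat's lemma, `L.goursatFst` and `L.goursatSnd` have the same
index in the projections of `L`; since `L` contains `G_a × H_b`, this common index divides both
`|G : G_a| = |Γ|` and `|H : H_b| = |Δ|`, so it is `1` and `L` splits as a product. Hence
`(a, b) ~ (x, d)` forces `(a, b) ~ (x, b)` and `(a, b) ~ (a, d)`, i.e. `r` is the product of
the partitions it induces on the two factors. These are invariant under `G` and `H`, hence orbit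
partitions of subgroups `A ≤ G` and `B ≤ H`, and `r` is the orbit partition of `A × B`.
-/

namespace Subgroup

variable {M N : Type*} [Group M] [Group N]

theorem relIndex_dvd_relIndex_of_le {S K L T : Subgroup M} (hSK : S ≤ K) (hKL : K ≤ L)
    (hLT : L ≤ T) : K.relIndex L ∣ S.relIndex T := by
  rw [← relIndex_mul_relIndex S L T (hSK.trans hKL) hLT,
    ← relIndex_mul_relIndex S K L hSK hKL]
  exact (dvd_mul_left _ _).mul_right _

theorem goursatFst_le_map_fst (L : Subgroup (M × N)) :
    L.goursatFst ≤ L.map (MonoidHom.fst M N) :=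
  fun m hm => ⟨(m, 1), mem_goursatFst.1 hm, rfl⟩

theorem goursatSnd_le_map_snd (L : Subgroup (M × N)) :
    L.goursatSnd ≤ L.map (MonoidHom.snd M N) :=
  fun n hn => ⟨(1, n), mem_goursatSnd.1 hn, rfl⟩

theorem relIndex_goursatFst_eq_relIndex_goursatSnd (L : Subgroup (M × N)) :
    L.goursatFst.relIndex (L.map (MonoidHom.fst M N)) =
      L.goursatSnd.relIndex (L.map (MonoidHom.snd M N)) := by
  rw [← relIndex_comap, ← relIndex_comap, ← inf_relIndex_right,
    ← inf_relIndex_right (L.goursatSnd.comap _)]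
  congr 1
  ext ⟨m, n⟩
  simp only [mem_inf, mem_comap, MonoidHom.coe_fst, MonoidHom.coe_snd, mem_goursatFst,
    mem_goursatSnd]
  -- `(m, n) = (m, 1) * (1, n)`
  constructor
  · rintro ⟨hm, hmn⟩
    refine ⟨?_, hmn⟩
    simpa using mul_mem (inv_mem hm) hmn
  · rintro ⟨hn, hmn⟩
    refine ⟨?_, hmn⟩
    simpa using mul_mem hmn (inv_mem hn)

theorem map_le_goursat_of_coprime {L : Subgroup (M × N)} {S₁ T₁ : Subgroup M}
    {S₂ T₂ : Subgroup N} (hS₁ : S₁ ≤ L.goursatFst) (hT₁ : L.map (MonoidHom.fst M N) ≤ T₁)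
    (hS₂ : S₂ ≤ L.goursatSnd) (hT₂ : L.map (MonoidHom.snd M N) ≤ T₂)
    (hcop : (S₁.relIndex T₁).Coprime (S₂.relIndex T₂)) :
    L.map (MonoidHom.fst M N) ≤ L.goursatFst ∧ L.map (MonoidHom.snd M N) ≤ L.goursatSnd := by
  have hdvd₁ := relIndex_dvd_relIndex_of_le hS₁ L.goursatFst_le_map_fst hT₁
  have hdvd₂ := relIndex_dvd_relIndex_of_le hS₂ L.goursatSnd_le_map_snd hT₂
  rw [← relIndex_goursatFst_eq_relIndex_goursatSnd] at hdvd₂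
  have hone := Nat.eq_one_of_dvd_coprimes hcop hdvd₁ hdvd₂
  exact ⟨relIndex_eq_one.1 hone,
    relIndex_eq_one.1 (L.relIndex_goursatFst_eq_relIndex_goursatSnd ▸ hone)⟩

end Subgroup

theorem IsTransitive.isPretransitive {G : Subgroup (Perm Ω)} (hG : IsTransitive G) :
    MulAction.IsPretransitive G Ω :=
  ⟨fun x y => let ⟨g, hg, hgx⟩ := hG x y; ⟨⟨g, hg⟩, hgx⟩⟩

theorem IsTransitive.relIndex_stabilizer {G : Subgroup (Perm Ω)} (hG : IsTransitive G)
    (a : Ω) : (MulAction.stabilizer (Perm Ω) a).relIndex G = Nat.card Ω := by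
  have := hG.isPretransitive
  rw [← MulAction.index_stabilizer_of_transitive G a]
  rfl

def Setoid.sliceFst {α β : Type*} (r : Setoid (α × β)) : Setoid α where
  r x x' := ∀ e, r.r (x, e) (x', e)
  iseqv := ⟨fun _ _ => r.iseqv.refl _, fun h e => r.iseqv.symm (h e),
    fun h h' e => r.iseqv.trans (h e) (h' e)⟩

def Setoid.sliceSnd {α β : Type*} (r : Setoid (α × β)) : Setoid β where
  r d d' := ∀ y, r.r (y, d) (y, d')
  iseqv := ⟨fun _ _ => r.iseqv.refl _, fun h y => r.iseqv.symm (h y),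
    fun h h' y => r.iseqv.trans (h y) (h' y)⟩

section ProductAction

variable {Γ Δ : Type*} {G : Subgroup (Perm Γ)} {H : Subgroup (Perm Δ)}

theorem prodPermHom_mem_productAction {g : Perm Γ} {h : Perm Δ} (hg : g ∈ G) (hh : h ∈ H) :
    prodPermHom Γ Δ (g, h) ∈ productAction G H :=
  Subgroup.mem_map_of_mem _ (Subgroup.mem_prod.2 ⟨hg, hh⟩)

theorem IsOrbitPartition.productAction {τ : Setoid Γ} {σ : Setoid Δ}
    (hG : IsOrbitPartition G τ) (hH : IsOrbitPartition H σ) :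
    IsOrbitPartition (productAction G H) (τ.prod σ) := by
  rintro ⟨x, d⟩ ⟨x', d'⟩
  rw [Setoid.prod_apply, hG, hH]
  constructor
  · rintro ⟨⟨g, hg, rfl⟩, ⟨h, hh, rfl⟩⟩
    exact ⟨_, prodPermHom_mem_productAction hg hh, rfl⟩
  · rintro ⟨_, ⟨⟨g, h⟩, hgh, rfl⟩, hx⟩
    exact ⟨⟨g, hgh.1, congrArg Prod.fst hx⟩, ⟨h, hgh.2, congrArg Prod.snd hx⟩⟩

variable {r : Setoid (Γ × Δ)}

namespace IsInvariantPartition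

theorem rel_prod (hr : IsInvariantPartition (productAction G H) r) {g : Perm Γ} (hg : g ∈ G)
    {h : Perm Δ} (hh : h ∈ H) {x x' : Γ} {d d' : Δ} (hxd : r.r (x, d) (x', d')) :
    r.r (g x, h d) (g x', h d') :=
  hr _ (prodPermHom_mem_productAction hg hh) _ _ hxd

theorem sliceFst (hr : IsInvariantPartition (productAction G H) r) :
    IsInvariantPartition G r.sliceFst :=
  fun _ hg _ _ hxx' e => hr.rel_prod hg H.one_mem (hxx' e)

theorem sliceSnd (hr : IsInvariantPartition (productAction G H) r) :
    IsInvariantPartition H r.sliceSnd :=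
  fun _ hh _ _ hdd' y => hr.rel_prod G.one_mem hh (hdd' y)

end IsInvariantPartition

def blockStabilizer (G : Subgroup (Perm Γ)) (H : Subgroup (Perm Δ)) (r : Setoid (Γ × Δ))
    (hr : IsInvariantPartition (productAction G H) r) (a : Γ) (b : Δ) :
    Subgroup (Perm Γ × Perm Δ) where
  carrier := {p | p.1 ∈ G ∧ p.2 ∈ H ∧ r.r (a, b) (p.1 a, p.2 b)}
  one_mem' := ⟨G.one_mem, H.one_mem, r.iseqv.refl (a, b)⟩
  mul_mem' hp hq := ⟨G.mul_mem hp.1 hq.1, H.mul_mem hp.2.1 hq.2.1,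
    r.iseqv.trans hp.2.2 (hr.rel_prod hp.1 hp.2.1 hq.2.2)⟩
  inv_mem' {p} hp := ⟨G.inv_mem hp.1, H.inv_mem hp.2.1, r.iseqv.symm <| by
    simpa using hr.rel_prod (G.inv_mem hp.1) (H.inv_mem hp.2.1) hp.2.2⟩

theorem stabilizer_inf_le_goursatFst (hr : IsInvariantPartition (productAction G H) r) (a : Γ)
    (b : Δ) : MulAction.stabilizer (Perm Γ) a ⊓ G ≤ (blockStabilizer G H r hr a b).goursatFst :=
  fun g ⟨(hga : g a = a), hg⟩ =>
    Subgroup.mem_goursatFst.2 ⟨hg, H.one_mem, by simp [hga]⟩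

theorem stabilizer_inf_le_goursatSnd (hr : IsInvariantPartition (productAction G H) r) (a : Γ)
    (b : Δ) : MulAction.stabilizer (Perm Δ) b ⊓ H ≤ (blockStabilizer G H r hr a b).goursatSnd :=
  fun h ⟨(hhb : h b = b), hh⟩ =>
    Subgroup.mem_goursatSnd.2 ⟨G.one_mem, hh, by simp [hhb]⟩

theorem map_fst_blockStabilizer_le (hr : IsInvariantPartition (productAction G H) r) (a : Γ)
    (b : Δ) : (blockStabilizer G H r hr a b).map (MonoidHom.fst _ _) ≤ G := by
  rintro _ ⟨p, hp, rfl⟩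
  exact hp.1

theorem map_snd_blockStabilizer_le (hr : IsInvariantPartition (productAction G H) r) (a : Γ)
    (b : Δ) : (blockStabilizer G H r hr a b).map (MonoidHom.snd _ _) ≤ H := by
  rintro _ ⟨p, hp, rfl⟩
  exact hp.2.1

variable [Fintype Γ] [Fintype Δ]

namespace IsInvariantPartition

theorem rel_mk_of_coprime (hG : IsTransitive G) (hH : IsTransitive H)
    (hcop : Nat.Coprime (Fintype.card Γ) (Fintype.card Δ))
    (hr : IsInvariantPartition (productAction G H) r) {a x : Γ} {b d : Δ}
    (hxd : r.r (a, b) (x, d)) : r.r (a, b) (x, b) ∧ r.r (a, b) (a, d) := by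
  set L := blockStabilizer G H r hr a b
  have hsplit := Subgroup.map_le_goursat_of_coprime (stabilizer_inf_le_goursatFst hr a b)
    (map_fst_blockStabilizer_le hr a b) (stabilizer_inf_le_goursatSnd hr a b)
    (map_snd_blockStabilizer_le hr a b)
    (by rwa [Subgroup.inf_relIndex_right, Subgroup.inf_relIndex_right, hG.relIndex_stabilizer,
      hH.relIndex_stabilizer, Nat.card_eq_fintype_card, Nat.card_eq_fintype_card])
  obtain ⟨g, hg, rfl⟩ := hG a x
  obtain ⟨h, hh, rfl⟩ := hH b d
  have hgh : (g, h) ∈ L := ⟨hg, hh, hxd⟩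
  exact ⟨(Subgroup.mem_goursatFst.1 (hsplit.1 ⟨_, hgh, rfl⟩)).2.2,
    (Subgroup.mem_goursatSnd.1 (hsplit.2 ⟨_, hgh, rfl⟩)).2.2⟩

theorem eq_prod_of_coprime (hG : IsTransitive G) (hH : IsTransitive H)
    (hcop : Nat.Coprime (Fintype.card Γ) (Fintype.card Δ))
    (hr : IsInvariantPartition (productAction G H) r) : r = r.sliceFst.prod r.sliceSnd := by
  ext ⟨x, d⟩ ⟨x', d'⟩
  constructor
  · intro hxd
    obtain ⟨hx, hd⟩ := hr.rel_mk_of_coprime hG hH hcop hxd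
    refine ⟨fun e => ?_, fun y => ?_⟩
    · obtain ⟨h, hh, rfl⟩ := hH d e
      exact hr.rel_prod G.one_mem hh hx
    · obtain ⟨g, hg, rfl⟩ := hG x y
      exact hr.rel_prod hg H.one_mem hd
  · rintro ⟨hx, hd⟩
    exact r.iseqv.trans (hx d) (hd x')

end IsInvariantPartition

end ProductAction

theorem product_of_preprimitive_coprime_degrees
    {Γ Δ : Type*} [Fintype Γ] [Fintype Δ]
    (G : Subgroup (Perm Γ)) (H : Subgroup (Perm Δ))
    (hG : IsTransitive G) (hH : IsTransitive H)
    (hGpp : IsPrePrimitive G) (hHpp : IsPrePrimitive H)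
    (hcop : Nat.Coprime (Fintype.card Γ) (Fintype.card Δ)) :
    IsPrePrimitive (productAction G H) := by
  intro r hr
  obtain ⟨A, hAG, hA⟩ := hGpp _ hr.sliceFst
  obtain ⟨B, hBH, hB⟩ := hHpp _ hr.sliceSnd
  refine ⟨productAction A B, Subgroup.map_mono (Subgroup.prod_mono hAG hBH), ?_⟩
  rw [hr.eq_prod_of_coprime hG hH hcop]
  exact hA.productAction hB
end

section
/- Let G be a transitive permutation group on a finite set Ω, and suppose Δ ⊆ Ω with |Δ| > |Ω|/2, and H ≤ G fixes every point of Ω∖Δ pointwise and acts pre-primitively (in particular transitively) on Δ. Then G is pre-primitive. -/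
open Equiv

variable {Ω : Type*}

/-
The kernel `S` of the action of `G` on the blocks of an invariant partition `r` is normal in
`G`. Pre-primitivity of `H` on `Δ` yields `K ≤ H` whose orbits are the traces `B ∩ Δ` of the
blocks; since `K` fixes `Ω ∖ Δ`, it lies in `S`, and so do its `G`-conjugates. Hence `S` is
transitive on every `G`-translate of a largest trace. Counting incidences between `Δ` and the
blocks, `|Δ| · |B| ≤ |Ω| · e < 2 |Δ| · e` for the maximal trace size `e`, so these translates
fill more than half of their block; two of them in the same block meet, and the orbits of `S`
are exactly the blocks.
-/

namespace Set

theorem inter_nonempty_of_ncard_lt_ncard_add_ncard {α : Type*} {s t u : Set α} (hs : s.Finite)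
    (hts : t ⊆ s) (hus : u ⊆ s) (hstu : s.ncard < t.ncard + u.ncard) : (t ∩ u).Nonempty := by
  apply nonempty_of_ncard_ne_zero
  have := ncard_union_add_ncard_inter t u (hs.subset hts) (hs.subset hus)
  have := ncard_le_ncard (union_subset hts hus) hs
  omega

end Set

theorem Equiv.Perm.apply_mem_of_forall_notMem {α : Type*} {σ : Perm α} {s : Set α}
    (hσ : ∀ x ∉ s, σ x = x) {x : α} (hx : x ∈ s) : σ x ∈ s := by
  by_contra h
  exact h (by rwa [σ.injective (hσ _ h)])

def eqvClass (r : Setoid Ω) (x : Ω) : Set Ω := {y | r x y}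

theorem eqvClass_eq_of_rel {r : Setoid Ω} {x y : Ω} (h : r x y) : eqvClass r x = eqvClass r y :=
  Set.ext fun _ => ⟨r.trans' (r.symm' h), r.trans' h⟩

theorem image_eqvClass {G : Subgroup (Perm Ω)} {r : Setoid Ω} (hr : IsInvariantPartition G r)
    {g : Perm Ω} (hg : g ∈ G) (x : Ω) : g '' eqvClass r x = eqvClass r (g x) := by
  refine Set.Subset.antisymm (Set.image_subset_iff.2 fun y => hr g hg x y) fun z hz => ?_
  refine ⟨g⁻¹ z, show r x (g⁻¹ z) from ?_, by simp⟩
  simpa using hr g⁻¹ (G.inv_mem hg) _ _ hz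

theorem ncard_eqvClass_eq {G : Subgroup (Perm Ω)} (hG : IsTransitive G) {r : Setoid Ω}
    (hr : IsInvariantPartition G r) (x y : Ω) :
    (eqvClass r x).ncard = (eqvClass r y).ncard := by
  obtain ⟨g, hg, rfl⟩ := hG x y
  rw [← image_eqvClass hr hg, Set.ncard_image_of_injective _ g.injective]

theorem ncard_mul_le_card_mul_of_ncard_eqvClass_inter_le [Fintype Ω] (r : Setoid Ω) (s : Set Ω)
    {d e : ℕ} (hd : ∀ x ∈ s, d ≤ (eqvClass r x).ncard)
    (he : ∀ x, (eqvClass r x ∩ s).ncard ≤ e) : s.ncard * d ≤ Fintype.card Ω * e := by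
  classical
  rw [Set.ncard_eq_toFinset_card', ← Finset.card_univ]
  refine Finset.card_mul_le_card_mul (r ·) (fun x hx => ?_) fun z _ => ?_
  · convert hd x (Set.mem_toFinset.1 hx) using 1
    rw [← Set.ncard_coe_finset]
    congr 1
    ext
    simp [eqvClass, Finset.bipartiteAbove]
  · convert he z using 1
    rw [← Set.ncard_coe_finset]
    congr 1
    ext
    simp [eqvClass, Finset.bipartiteBelow, and_comm, Setoid.comm']

theorem ncard_eqvClass_lt_two_mul [Fintype Ω] {G : Subgroup (Perm Ω)} (hG : IsTransitive G)
    {r : Setoid Ω} (hr : IsInvariantPartition G r) {Δ : Set Ω}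
    (hcard : Fintype.card Ω < 2 * Δ.ncard) {u : Ω}
    (hu : ∀ z, (eqvClass r z ∩ Δ).ncard ≤ (eqvClass r u ∩ Δ).ncard) (x : Ω) :
    (eqvClass r x).ncard < 2 * (eqvClass r u ∩ Δ).ncard := by
  have hcount := ncard_mul_le_card_mul_of_ncard_eqvClass_inter_le r Δ
    (fun y _ => (ncard_eqvClass_eq hG hr x y).le) hu
  have hΔ : 0 < Δ.ncard := by omega
  have hx : 0 < (eqvClass r x).ncard := (Set.ncard_pos (Set.toFinite _)).2 ⟨x, r.refl' x⟩
  by_contra! h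
  nlinarith

def IsTransitiveOn (S : Subgroup (Perm Ω)) (E : Set Ω) : Prop :=
  ∀ p ∈ E, ∀ q ∈ E, ∃ σ ∈ S, σ p = q

theorem IsTransitiveOn.mono {S T : Subgroup (Perm Ω)} {E : Set Ω} (h : IsTransitiveOn S E)
    (hST : S ≤ T) : IsTransitiveOn T E := fun p hp q hq =>
  let ⟨σ, hσ, hσpq⟩ := h p hp q hq
  ⟨σ, hST hσ, hσpq⟩

theorem IsTransitiveOn.image {N G : Subgroup (Perm Ω)} {E : Set Ω} (h : IsTransitiveOn N E)
    (hN : IsNormalIn N G) {g : Perm Ω} (hg : g ∈ G) : IsTransitiveOn N (g '' E) := by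
  rintro _ ⟨p, hp, rfl⟩ _ ⟨q, hq, rfl⟩
  obtain ⟨σ, hσ, rfl⟩ := h p hp q hq
  exact ⟨g * σ * g⁻¹, hN.2 g hg σ hσ, by simp⟩

def blockKernel (G : Subgroup (Perm Ω)) (r : Setoid Ω) : Subgroup (Perm Ω) where
  carrier := {σ | σ ∈ G ∧ ∀ x, r x (σ x)}
  one_mem' := ⟨G.one_mem, r.refl'⟩
  mul_mem' := fun ha hb => ⟨G.mul_mem ha.1 hb.1, fun x => r.trans' (hb.2 x) (ha.2 _)⟩
  inv_mem' := fun {a} ha => ⟨G.inv_mem ha.1, fun x => r.symm' (by simpa using ha.2 (a⁻¹ x))⟩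

theorem blockKernel_le (G : Subgroup (Perm Ω)) (r : Setoid Ω) : blockKernel G r ≤ G :=
  fun _ hσ => hσ.1

theorem isNormalIn_blockKernel {G : Subgroup (Perm Ω)} {r : Setoid Ω}
    (hr : IsInvariantPartition G r) : IsNormalIn (blockKernel G r) G := by
  refine ⟨blockKernel_le G r, fun g hg σ hσ => ⟨G.mul_mem (G.mul_mem hg hσ.1) (G.inv_mem hg),
    fun x => ?_⟩⟩
  simpa using hr g hg _ _ (hσ.2 (g⁻¹ x))

theorem isOrbitPartition_blockKernel [Finite Ω] {G : Subgroup (Perm Ω)} {r : Setoid Ω}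
    (hedge : ∀ x, ∃ E : Set Ω, x ∈ E ∧ E ⊆ eqvClass r x ∧
      (eqvClass r x).ncard < 2 * E.ncard ∧ IsTransitiveOn (blockKernel G r) E) :
    IsOrbitPartition (blockKernel G r) r := by
  intro x y
  refine ⟨fun hxy => ?_, fun ⟨σ, hσ, hσx⟩ => hσx ▸ hσ.2 x⟩
  obtain ⟨E₁, hxE₁, hE₁, hE₁card, hE₁trans⟩ := hedge x
  obtain ⟨E₂, hyE₂, hE₂, hE₂card, hE₂trans⟩ := hedge y
  rw [← eqvClass_eq_of_rel hxy] at hE₂ hE₂card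
  obtain ⟨w, hw₁, hw₂⟩ := Set.inter_nonempty_of_ncard_lt_ncard_add_ncard (Set.toFinite _)
    hE₁ hE₂ (by omega)
  obtain ⟨σ₁, hσ₁, hσ₁x⟩ := hE₁trans x hxE₁ w hw₁
  obtain ⟨σ₂, hσ₂, hσ₂y⟩ := hE₂trans y hyE₂ w hw₂
  exact ⟨σ₂⁻¹ * σ₁, mul_mem (inv_mem hσ₂) hσ₁, by simp [hσ₁x, ← hσ₂y]⟩

theorem preprimitive_of_large_preprimitive_subgroup_general
    {Ω : Type*} [Fintype Ω] (G : Subgroup (Perm Ω)) (hG : IsTransitive G)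
    (Δ : Set Ω) (hcard : Fintype.card Ω < 2 * Δ.ncard)
    (H : Subgroup (Perm Ω)) (hHG : H ≤ G)
    (hfix : ∀ h ∈ H, ∀ x ∉ Δ, h x = x)
    (hppΔ : ∀ r : Setoid Δ,
      (∀ h ∈ H, ∀ x y : Δ, ∀ (hx : h (x : Ω) ∈ Δ) (hy : h (y : Ω) ∈ Δ),
        r.r x y → r.r ⟨h (x : Ω), hx⟩ ⟨h (y : Ω), hy⟩) →
      ∃ K ≤ H, ∀ x y : Δ, r.r x y ↔ ∃ k ∈ K, k (x : Ω) = (y : Ω)) :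
    IsPrePrimitive G := by
  intro r hr
  obtain ⟨K, hKH, hK⟩ := hppΔ (r.comap (↑)) fun h hh x y _ _ hxy => hr h (hHG hh) x y hxy
  have hKS : K ≤ blockKernel G r := by
    refine fun k hk => ⟨hHG (hKH hk), fun x => ?_⟩
    by_cases hx : x ∈ Δ
    · exact (hK ⟨x, hx⟩ ⟨k x, Perm.apply_mem_of_forall_notMem (hfix k (hKH hk)) hx⟩).2
        ⟨k, hk, rfl⟩
    · rw [hfix k (hKH hk) x hx]
  obtain ⟨x₀, hx₀Δ⟩ := Set.nonempty_of_ncard_ne_zero (s := Δ) (by omega)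
  have : Nonempty Ω := ⟨x₀⟩
  obtain ⟨u, hu⟩ := Finite.exists_max fun z => (eqvClass r z ∩ Δ).ncard
  have htrace₀ : 0 < (eqvClass r x₀ ∩ Δ).ncard :=
    (Set.ncard_pos (Set.toFinite _)).2 ⟨x₀, r.refl' x₀, hx₀Δ⟩
  obtain ⟨v, huv, hv⟩ := Set.nonempty_of_ncard_ne_zero (htrace₀.trans_le (hu x₀)).ne'
  rw [eqvClass_eq_of_rel huv] at hu
  have hKv : IsTransitiveOn K (eqvClass r v ∩ Δ) := fun p hp q hq =>
    (hK ⟨p, hp.2⟩ ⟨q, hq.2⟩).1 (r.trans' (r.symm' hp.1) hq.1)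
  refine ⟨blockKernel G r, blockKernel_le G r, isOrbitPartition_blockKernel fun x => ?_⟩
  obtain ⟨g, hg, rfl⟩ := hG v x
  refine ⟨g '' (eqvClass r v ∩ Δ), ⟨v, ⟨r.refl' v, hv⟩, rfl⟩, ?_, ?_,
    (hKv.mono hKS).image (isNormalIn_blockKernel hr) hg⟩
  · rw [← image_eqvClass hr hg]
    exact Set.image_mono Set.inter_subset_left
  · rw [Set.ncard_image_of_injective _ g.injective]
    exact ncard_eqvClass_lt_two_mul hG hr hcard hu _

/-- A Jordan-type theorem for pre-primitivity. -/
theorem preprimitive_of_large_preprimitive_subgroup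
    {Ω : Type*} [Fintype Ω] (G : Subgroup (Perm Ω)) (hG : IsTransitive G)
    (Δ : Set Ω) (hcard : Fintype.card Ω < 2 * Δ.ncard)
    (H : Subgroup (Perm Ω)) (hHG : H ≤ G)
    (hfix : ∀ h ∈ H, ∀ x ∉ Δ, h x = x)
    (htransΔ : ∀ x ∈ Δ, ∀ y ∈ Δ, ∃ h ∈ H, h x = y)
    (hppΔ : ∀ r : Setoid Δ,
      (∀ h ∈ H, ∀ x y : Δ, ∀ (hx : h (x : Ω) ∈ Δ) (hy : h (y : Ω) ∈ Δ),
        r.r x y → r.r ⟨h (x : Ω), hx⟩ ⟨h (y : Ω), hy⟩) →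
      ∃ K ≤ H, ∀ x y : Δ, r.r x y ↔ ∃ k ∈ K, k (x : Ω) = (y : Ω)) :
    IsPrePrimitive G :=
  preprimitive_of_large_preprimitive_subgroup_general G hG Δ hcard H hHG hfix hppΔ
end
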